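/- Dual Pair Theorem: Let A and B be N x K ternary CCMs (entries in {-1,0,1}, with A A^* and B B^* diagonally regular). If (i) |A_{n,k}| + |B_{n,k}| = 1 for all n, k, and (ii) B A^* - B^* A is diagonally regular, then Z = A + iB is an N x K matrix whose entries are all in {1, i, -1, -i} and Z Z^* is diagonally regular (i.e., Z is a quad-phase CCM). -/

import Mathlib

/-
The row Gramian of `Z = A + iB` splits as `Z Zᴴ = (A Aᴴ + B Bᴴ) + i (B Aᴴ - A Bᴴ)`, and diagonal
regularity is a linear condition (each off-diagonal sum is a linear functional), so it passes to
`Z Zᴴ` from the three hypotheses. The dual-pair condition `|A_{n,k}| + |B_{n,k}| = 1` says that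
exactly one of two ternary entries is nonzero, so `A_{n,k} + i B_{n,k}` is one of `±1, ±i`.
-/

/-- An `N × N` matrix is diagonally regular if every off-diagonal sums to zero. -/
def DiagReg {N : ℕ} (Q : Matrix (Fin N) (Fin N) ℂ) : Prop :=
  ∀ d : ℤ, d ≠ 0 →
    (∑ n : Fin N, ∑ m : Fin N, if (m : ℤ) - (n : ℤ) = d then Q n m else 0) = 0

open scoped Matrix

def diagRegSubmodule (N : ℕ) : Submodule ℂ (Matrix (Fin N) (Fin N) ℂ) where
  carrier := {Q | DiagReg Q}
  zero_mem' := fun _ _ => by simp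
  add_mem' := fun {P Q} hP hQ d hd => by
    simp only [Matrix.add_apply, ite_add_zero, Finset.sum_add_distrib,
      hP d hd, hQ d hd, add_zero]
  smul_mem' := fun c Q hQ d hd => by
    simp only [Matrix.smul_apply, smul_eq_mul, ← mul_ite_zero, ← Finset.mul_sum,
      hQ d hd, mul_zero]

theorem Matrix.add_I_smul_mul_conjTranspose {m n : Type*} [Fintype n] (A B : Matrix m n ℂ) :
    (A + Complex.I • B) * (A + Complex.I • B)ᴴ
      = (A * Aᴴ + B * Bᴴ) + Complex.I • (B * Aᴴ - A * Bᴴ) := by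
  have hI : star Complex.I = -Complex.I := Complex.conj_I
  simp only [Matrix.conjTranspose_add, Matrix.conjTranspose_smul, hI, Matrix.add_mul,
    Matrix.mul_add, Matrix.smul_mul, Matrix.mul_smul]
  match_scalars <;> simp

theorem Complex.add_I_mul_mem_of_ternary {a b : ℂ} (ha : a ∈ ({-1, 0, 1} : Set ℂ))
    (hb : b ∈ ({-1, 0, 1} : Set ℂ)) (hab : ‖a‖ + ‖b‖ = 1) :
    a + Complex.I * b ∈ ({1, Complex.I, -1, -Complex.I} : Set ℂ) := by
  rcases ha with rfl | rfl | rfl <;> rcases hb with rfl | rfl | rfl <;> norm_num at hab <;> simp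

/-- Dual Pair Theorem: if `A` and `B` are ternary CCMs (entries in `{-1,0,1}`,
diagonally regular row Gramians) forming a dual pair (`|A_{n,k}| + |B_{n,k}| = 1`)
whose commutator `B Aᴴ - A Bᴴ` is diagonally regular, then `Z = A + iB` is a
quad-phase CCM: every entry lies in `{1, i, -1, -i}` and `Z Zᴴ` is diagonally
regular. -/
theorem dual_pair (N K : ℕ) (A B : Matrix (Fin N) (Fin K) ℂ)
    (hA : ∀ n k, A n k ∈ ({-1, 0, 1} : Set ℂ))
    (hB : ∀ n k, B n k ∈ ({-1, 0, 1} : Set ℂ))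
    (hAreg : DiagReg (A * A.conjTranspose))
    (hBreg : DiagReg (B * B.conjTranspose))
    (hdual : ∀ n k, ‖A n k‖ + ‖B n k‖ = 1)
    (hcomm : DiagReg (B * A.conjTranspose - A * B.conjTranspose)) :
    (∀ n k, (A + Complex.I • B) n k ∈ ({1, Complex.I, -1, -Complex.I} : Set ℂ)) ∧
    DiagReg ((A + Complex.I • B) * (A + Complex.I • B).conjTranspose) := by
  refine ⟨fun n k => Complex.add_I_mul_mem_of_ternary (hA n k) (hB n k) (hdual n k), ?_⟩
  show _ ∈ diagRegSubmodule N
  rw [Matrix.add_I_smul_mul_conjTranspose]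
  exact add_mem (add_mem hAreg hBreg) (Submodule.smul_mem _ _ hcomm)
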